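/- arXiv:1208.2617 — 3 statements merged into one kernel-verified Lean document; each statement's English description precedes it below -/
import Mathlib

section
/- The lattice boundary operator is a differential: the 𝔽[U]-linear endomorphism ∂ of CF⁻(G) defined on generators by ∂[K,E] = Σ_{v∈E} (U^{a_v(K,E)}·[K, E∖{v}] + U^{b_v(K,E)}·[K+2v*, E∖{v}]) satisfies ∂ ∘ ∂ = 0. -/
open Finset

variable {V : Type*}

/-- `M` is negative definite: `xᵀMx < 0` for every nonzero `x ∈ ℝ^V`. -/
def NegDef [Fintype V] (M : V → V → ℤ) : Prop :=
  ∀ x : V → ℝ, x ≠ 0 → (∑ v, ∑ w, (M v w : ℝ) * x v * x w) < 0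

/-- `K` is a characteristic vector for `M`: `K(v) ≡ v·v (mod 2)` for all `v`. -/
def IsChar (M : V → V → ℤ) (K : V → ℤ) : Prop :=
  ∀ v, Int.ModEq 2 (K v) (M v v)

/-- `f(K, I) = (1/2)(Σ_{v∈I} K(v) + (Σ_{v∈I} v)·(Σ_{v∈I} v))` (an exact integer division
for characteristic `K`). -/
def latF (M : V → V → ℤ) (K : V → ℤ) (I : Finset V) : ℤ :=
  ((∑ v ∈ I, K v) + ∑ v ∈ I, ∑ w ∈ I, M v w) / 2

/-- `g(K, E) = min_{I ⊆ E} f(K, I)`. -/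
def latG (M : V → V → ℤ) (K : V → ℤ) (E : Finset V) : ℤ :=
  (E.powerset.image (latF M K)).min'
    ⟨_, Finset.mem_image_of_mem _ (Finset.empty_mem_powerset E)⟩

/-- `B_v(K, E) = min { f(K, I) : v ∈ I ⊆ E }` (for `v ∈ E`). -/
def latB [DecidableEq V] (M : V → V → ℤ) (K : V → ℤ) (E : Finset V) (v : V) : ℤ :=
  ((E.erase v).powerset.image (fun I => latF M K (insert v I))).min'
    ⟨_, Finset.mem_image_of_mem _ (Finset.empty_mem_powerset _)⟩

/-- `a_v(K,E) = A_v(K,E) - g(K,E) = g(K, E∖{v}) - g(K,E)`. -/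
def lata [DecidableEq V] (M : V → V → ℤ) (K : V → ℤ) (E : Finset V) (v : V) : ℤ :=
  latG M K (E.erase v) - latG M K E

/-- `b_v(K,E) = B_v(K,E) - g(K,E)`. -/
def latb [DecidableEq V] (M : V → V → ℤ) (K : V → ℤ) (E : Finset V) (v : V) : ℤ :=
  latB M K E v - latG M K E

lemma isChar_addDual (M : V → V → ℤ) (K : V → ℤ) (hK : IsChar M K) (v : V) :
    IsChar M (fun w => K w + 2 * M v w) := by
  intro w
  have h2 : Int.ModEq 2 (2 * M v w) 0 := Int.modEq_zero_iff_dvd.mpr ⟨M v w, rfl⟩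
  simpa using (hK w).add h2

/-- The coefficient ring `𝔽[U]` with `𝔽 = ℤ/2ℤ` (the variable `X` plays the role of `U`). -/
abbrev RU : Type := Polynomial (ZMod 2)

/-- `CF⁻(G)`: the free `𝔽[U]`-module generated by the pairs `[K,E]` with `K` characteristic
and `E ⊆ V`. -/
abbrev CFm (M : V → V → ℤ) : Type _ := ({K : V → ℤ // IsChar M K} × Finset V) →₀ RU

/-- The lattice boundary operator
`∂[K,E] = Σ_{v∈E} (U^{a_v(K,E)}·[K,E∖{v}] + U^{b_v(K,E)}·[K+2v*,E∖{v}])`. -/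
noncomputable def lbd [DecidableEq V] (M : V → V → ℤ) : CFm M →ₗ[RU] CFm M :=
  Finsupp.lift (CFm M) RU ({K : V → ℤ // IsChar M K} × Finset V) fun g =>
    ∑ v ∈ g.2,
      (Finsupp.single (g.1, g.2.erase v) (Polynomial.X ^ (lata M g.1.1 g.2 v).toNat)
       + Finsupp.single
           (⟨fun w => g.1.1 w + 2 * M v w, isChar_addDual M g.1.1 g.1.2 v⟩, g.2.erase v)
           (Polynomial.X ^ (latb M g.1.1 g.2 v).toNat))

-- helper
lemma min'_image_sub (S : Finset (Finset V)) (hS : S.Nonempty) (g h : Finset V → ℤ) (c : ℤ)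
    (hgh : ∀ I ∈ S, g I = h I - c) :
    (S.image g).min' (hS.image g) = (S.image h).min' (hS.image h) - c := by
  apply le_antisymm
  · obtain ⟨I, hI, hImin⟩ := Finset.mem_image.mp (Finset.min'_mem (S.image h) (hS.image h))
    have h1 : (S.image g).min' (hS.image g) ≤ g I :=
      Finset.min'_le _ _ (Finset.mem_image_of_mem g hI)
    have h2 := hgh I hI
    omega
  · obtain ⟨I, hI, hImin⟩ := Finset.mem_image.mp (Finset.min'_mem (S.image g) (hS.image g))
    have h1 : (S.image h).min' (hS.image h) ≤ h I :=
      Finset.min'_le _ _ (Finset.mem_image_of_mem h hI)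
    have h2 := hgh I hI
    omega

lemma latF_insert [DecidableEq V] (M : V → V → ℤ) (hsym : ∀ v w, M v w = M w v) (K : V → ℤ) (hK : IsChar M K)
    (v : V) (I : Finset V) (hv : v ∉ I) :
    latF M K (insert v I) = latF M K I + latF M K {v} + ∑ w ∈ I, M v w := by
  have hmod : K v % 2 = M v v % 2 := hK v
  unfold latF
  rw [Finset.sum_insert hv, Finset.sum_insert hv, Finset.sum_insert hv]
  have h2 : ∑ x ∈ I, ∑ w ∈ insert v I, M x w
      = (∑ w ∈ I, M v w) + ∑ x ∈ I, ∑ w ∈ I, M x w := by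
    rw [← Finset.sum_add_distrib]
    exact Finset.sum_congr rfl fun x hx => by rw [Finset.sum_insert hv, hsym x v]
  rw [h2]
  simp only [Finset.sum_singleton]
  omega

lemma latF_addDual (M : V → V → ℤ) (K : V → ℤ) (v : V) (I : Finset V) :
    latF M (fun w => K w + 2 * M v w) I = latF M K I + ∑ w ∈ I, M v w := by
  unfold latF
  rw [Finset.sum_add_distrib, ← Finset.mul_sum]
  omega

lemma latF_addDual' [DecidableEq V] (M : V → V → ℤ) (hsym : ∀ v w, M v w = M w v) (K : V → ℤ) (hK : IsChar M K)
    (v : V) (I : Finset V) (hv : v ∉ I) :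
    latF M (fun w => K w + 2 * M v w) I = latF M K (insert v I) - latF M K {v} := by
  rw [latF_addDual, latF_insert M hsym K hK v I hv]; ring

lemma min'_congr (s t : Finset ℤ) (hs : s.Nonempty) (ht : t.Nonempty) (h : s = t) :
    s.min' hs = t.min' ht := by subst h; rfl

lemma latG_anti (M : V → V → ℤ) (K : V → ℤ) {E E' : Finset V} (h : E' ⊆ E) :
    latG M K E ≤ latG M K E' := by
  unfold latG
  exact Finset.min'_subset _ (Finset.image_subset_image (Finset.powerset_mono.mpr h))

lemma latG_le_latB [DecidableEq V] (M : V → V → ℤ) (K : V → ℤ) {E : Finset V} {v : V}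
    (hv : v ∈ E) : latG M K E ≤ latB M K E v := by
  unfold latG latB
  apply Finset.le_min'
  intro y hy
  obtain ⟨I, hI, rfl⟩ := Finset.mem_image.mp hy
  apply Finset.min'_le
  apply Finset.mem_image_of_mem
  rw [Finset.mem_powerset] at hI ⊢
  exact Finset.insert_subset hv (hI.trans (Finset.erase_subset _ _))

lemma latG_addDual [DecidableEq V] (M : V → V → ℤ) (hsym : ∀ v w, M v w = M w v)
    (K : V → ℤ) (hK : IsChar M K) (E : Finset V) (v : V) :
    latG M (fun w => K w + 2 * M v w) (E.erase v) = latB M K E v - latF M K {v} := by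
  unfold latG latB
  refine min'_image_sub _ ⟨∅, Finset.empty_mem_powerset _⟩ _ _ _ fun I hI => ?_
  refine latF_addDual' M hsym K hK v I fun hvI => ?_
  exact (Finset.mem_erase.mp (Finset.mem_powerset.mp hI hvI)).1 rfl

def latB2 [DecidableEq V] (M : V → V → ℤ) (K : V → ℤ) (E : Finset V) (v u : V) : ℤ :=
  (((E.erase v).erase u).powerset.image (fun I => latF M K (insert v (insert u I)))).min'
    ⟨_, Finset.mem_image_of_mem _ (Finset.empty_mem_powerset _)⟩

lemma latB_addDual [DecidableEq V] (M : V → V → ℤ) (hsym : ∀ v w, M v w = M w v)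
    (K : V → ℤ) (hK : IsChar M K) (E : Finset V) {v u : V} (hvu : v ≠ u) :
    latB M (fun w => K w + 2 * M v w) (E.erase v) u = latB2 M K E v u - latF M K {v} := by
  unfold latB latB2
  refine min'_image_sub _ ⟨∅, Finset.empty_mem_powerset _⟩ _ _ _ fun I hI => ?_
  refine latF_addDual' M hsym K hK v (insert u I) ?_
  rw [Finset.mem_powerset] at hI
  simp only [Finset.mem_insert, not_or]
  exact ⟨hvu, fun hvI => (Finset.mem_erase.mp (Finset.mem_of_subset (Finset.erase_subset u _) (hI hvI))).1 rfl⟩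

lemma latB2_comm [DecidableEq V] (M : V → V → ℤ) (K : V → ℤ) (E : Finset V) (v u : V) :
    latB2 M K E v u = latB2 M K E u v := by
  have hs : ((E.erase v).erase u) = ((E.erase u).erase v) := Finset.erase_right_comm
  have hf : (fun I => latF M K (insert v (insert u I)))
      = (fun I => latF M K (insert u (insert v I))) := by
    funext I; rw [Finset.insert_comm]
  unfold latB2
  exact min'_congr _ _ _ _ (by rw [hs, hf])

section Aux
variable [DecidableEq V] (M : V → V → ℤ)

lemma lata_nonneg (K : V → ℤ) (E : Finset V) (v : V) : 0 ≤ lata M K E v :=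
  sub_nonneg.mpr (latG_anti M K (Finset.erase_subset v E))

lemma latb_nonneg (K : V → ℤ) {E : Finset V} {v : V} (hv : v ∈ E) : 0 ≤ latb M K E v :=
  sub_nonneg.mpr (latG_le_latB M K hv)

variable (hsym : ∀ v w, M v w = M w v) (K : V → ℤ) (hK : IsChar M K)
variable {E : Finset V} {v u : V}

include hsym hK

lemma expA (hv : v ∈ E) (hu : u ∈ E) (hvu : v ≠ u) :
    (lata M K E v).toNat + (lata M K (E.erase v) u).toNat
      = (lata M K E u).toNat + (lata M K (E.erase u) v).toNat := by
  have h1 := lata_nonneg M K E v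
  have h2 := lata_nonneg M K (E.erase v) u
  have h3 := lata_nonneg M K E u
  have h4 := lata_nonneg M K (E.erase u) v
  have key : (E.erase v).erase u = (E.erase u).erase v := Finset.erase_right_comm
  unfold lata at *
  rw [key] at h2 ⊢
  omega

lemma expAB (hv : v ∈ E) (hu : u ∈ E) (hvu : v ≠ u) :
    (lata M K E v).toNat + (latb M K (E.erase v) u).toNat
      = (latb M K E u).toNat + (lata M (fun w => K w + 2 * M u w) (E.erase u) v).toNat := by
  have hu' : u ∈ E.erase v := Finset.mem_erase.mpr ⟨fun h => hvu h.symm, hu⟩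
  have h1 := lata_nonneg M K E v
  have h2 := latb_nonneg M K hu'
  have h3 := latb_nonneg M K hu
  have h4 := lata_nonneg M (fun w => K w + 2 * M u w) (E.erase u) v
  have p1 := latG_addDual M hsym K hK E u
  have p2 := latG_addDual M hsym K hK (E.erase v) u
  have key : (E.erase u).erase v = (E.erase v).erase u := Finset.erase_right_comm
  unfold lata latb at *
  rw [key] at h4 ⊢
  omega

lemma expB (hv : v ∈ E) (hu : u ∈ E) (hvu : v ≠ u) :
    (latb M K E v).toNat + (latb M (fun w => K w + 2 * M v w) (E.erase v) u).toNat
      = (latb M K E u).toNat + (latb M (fun w => K w + 2 * M u w) (E.erase u) v).toNat := by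
  have hu' : u ∈ E.erase v := Finset.mem_erase.mpr ⟨fun h => hvu h.symm, hu⟩
  have hv' : v ∈ E.erase u := Finset.mem_erase.mpr ⟨hvu, hv⟩
  have h1 := latb_nonneg M K hv
  have h2 := latb_nonneg M (fun w => K w + 2 * M v w) hu'
  have h3 := latb_nonneg M K hu
  have h4 := latb_nonneg M (fun w => K w + 2 * M u w) hv'
  have p1 := latG_addDual M hsym K hK E v
  have p2 := latG_addDual M hsym K hK E u
  have q1 := latB_addDual M hsym K hK E hvu
  have q2 := latB_addDual M hsym K hK E hvu.symm
  have key := latB2_comm M K E v u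
  unfold latb at *
  omega

end Aux


noncomputable def Dfun [DecidableEq V] (M : V → V → ℤ)
    (g : {K : V → ℤ // IsChar M K} × Finset V) : CFm M :=
  ∑ v ∈ g.2,
    (Finsupp.single (g.1, g.2.erase v) (Polynomial.X ^ (lata M g.1.1 g.2 v).toNat)
     + Finsupp.single
         (⟨fun w => g.1.1 w + 2 * M v w, isChar_addDual M g.1.1 g.1.2 v⟩, g.2.erase v)
         (Polynomial.X ^ (latb M g.1.1 g.2 v).toNat))

lemma lbd_single [DecidableEq V] (M : V → V → ℤ)
    (g : {K : V → ℤ // IsChar M K} × Finset V) (c : RU) :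
    lbd M (Finsupp.single g c) = c • Dfun M g := by
  unfold lbd
  rw [Finsupp.lift_apply]
  show (Finsupp.single g c).sum (fun x r => r • Dfun M x) = c • Dfun M g
  exact Finsupp.sum_single_index (h := fun x r => r • Dfun M x) (zero_smul RU (Dfun M g))

lemma cfm_add_self {M : V → V → ℤ} (x : CFm M) : x + x = 0 := by
  have h2 : (2 : RU) = 0 := by
    have h : ((2 : ℕ) : ZMod 2) = 0 := by decide
    have h' := Polynomial.C_eq_natCast (R := ZMod 2) 2
    rw [h, map_zero] at h'
    simpa using h'.symm
  calc x + x = (2 : RU) • x := (two_smul RU x).symm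
  _ = 0 := by rw [h2, zero_smul]

lemma pair_helper {M : V → V → ℤ} (a b c d : CFm M) :
    a + b + (c + d) + (a + c + (b + d)) = 0 := by
  have h : a + b + (c + d) + (a + c + (b + d))
      = (a + a) + ((b + b) + ((c + c) + (d + d))) := by abel
  rw [h, cfm_add_self, cfm_add_self, cfm_add_self, cfm_add_self]
  simp



/-- the lattice boundary operator is a differential: `∂ ∘ ∂ = 0`. -/
theorem stmt5 [Fintype V] [DecidableEq V] (M : V → V → ℤ)
    (hsym : ∀ v w, M v w = M w v)
    (hoff : ∀ v w, v ≠ w → M v w = 0 ∨ M v w = 1)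
    (hneg : NegDef M) :
    (lbd M).comp (lbd M) = 0 := by
  apply Finsupp.lhom_ext
  intro g c
  rw [LinearMap.comp_apply, LinearMap.zero_apply, lbd_single, map_smul]
  suffices h : lbd M (Dfun M g) = 0 by rw [h, smul_zero]
  obtain ⟨⟨K, hK⟩, E⟩ := g
  unfold Dfun
  rw [map_sum]
  simp only [map_add, lbd_single]
  unfold Dfun
  simp only [Finset.smul_sum, smul_add, Finsupp.smul_single', ← pow_add,
    ← Finset.sum_add_distrib]
  rw [Finset.sum_sigma' E (fun v => E.erase v)]
  refine Finset.sum_involution (fun p _ => ⟨p.2, p.1⟩) ?_ ?_ ?_ ?_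
  · rintro ⟨v, u⟩ ha
    simp only [Finset.mem_sigma, Finset.mem_erase] at ha
    obtain ⟨hv, huv, hu⟩ := ha
    dsimp only
    have hvu : v ≠ u := fun h => huv h.symm
    have hEE : (E.erase u).erase v = (E.erase v).erase u := Finset.erase_right_comm
    have hx1 := expA M hsym K hK hu hv (Ne.symm hvu)
    have hx2 := expAB M hsym K hK hu hv (Ne.symm hvu)
    have hx3 := (expAB M hsym K hK hv hu hvu).symm
    have hx4 := expB M hsym K hK hu hv (Ne.symm hvu)
    have hvec : (⟨fun w => K w + 2 * M u w + 2 * M v w,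
        isChar_addDual M (fun w => K w + 2 * M u w) (isChar_addDual M K hK u) v⟩ :
        {K : V → ℤ // IsChar M K})
        = ⟨fun w => K w + 2 * M v w + 2 * M u w,
        isChar_addDual M (fun w => K w + 2 * M v w) (isChar_addDual M K hK v) u⟩ :=
      Subtype.ext (funext fun w => by ring)
    rw [hEE, hx1, hx2, hx3, hx4, hvec]
    exact pair_helper _ _ _ _
  · rintro ⟨v, u⟩ ha _
    simp only [Finset.mem_sigma, Finset.mem_erase] at ha
    dsimp only
    exact fun h => ha.2.1 (congrArg Sigma.fst h)
  · rintro ⟨v, u⟩ ha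
    dsimp only
    simp only [Finset.mem_sigma, Finset.mem_erase] at ha ⊢
    exact ⟨ha.2.2, fun h => ha.2.1 h.symm, ha.1⟩
  · rintro ⟨v, u⟩ ha
    rfl
end

section
/- Additivity of the Alexander grading under connected sum: for characteristic vectors K₁ for M₁ and K₂ for M₂ and subsets E₁ ⊆ V₁, E₂ ⊆ V₂, the Alexander grading A_# on the disjoint union graph induced by the merged distinguished vertex satisfies A_#([K₁⊕K₂, E₁ ∪ E₂]) = A₁([K₁,E₁]) + A₂([K₂,E₂]). -/
open Finset

variable {V : Type*}

/-- The intersection matrix of the graph obtained by attaching the framing `m₀` to the extra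
vertex `v₀ = none`, joined to `G` by the edges recorded by `e`. -/
def Mext (M : V → V → ℤ) (e : V → ℤ) (m₀ : ℤ) : Option V → Option V → ℤ := fun x y =>
  match x, y with
  | some v, some w => M v w
  | some v, none => e v
  | none, some w => e w
  | none, none => m₀

/-- The coefficients of `Σ = v₀ + Σ_{v∈V} a_v·v`: `a = −M⁻¹e`, the unique solution of
`w·Σ = 0` for all `w ∈ V`. -/
noncomputable def sigmaC [Fintype V] [DecidableEq V] (M : V → V → ℤ) (e : V → ℤ) : V → ℚ :=
  fun v => -∑ u, ((Matrix.of fun a b => (M a b : ℚ))⁻¹ v u) * e u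

/-- The rational homology class `Σ = v₀ + Σ_{v∈V} a_v·v` (coordinates). -/
noncomputable def sigmaV [Fintype V] [DecidableEq V] (M : V → V → ℤ) (e : V → ℤ) :
    Option V → ℚ
  | none => 1
  | some v => sigmaC M e v

/-- The unique characteristic extension `L_{[K,E]}` of `K` over `v₀` (for the framing `m₀`)
with `a_{v₀}(L, E∪{v₀}) = b_{v₀}(L, E∪{v₀}) = 0`:
`L(v₀) = −m₀ + 2g(K,E) − 2g(K+2v₀*,E)`. -/
def LextV [DecidableEq V] (M : V → V → ℤ) (e : V → ℤ) (m₀ : ℤ) (K : V → ℤ) (E : Finset V) :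
    Option V → ℤ
  | some v => K v
  | none => -m₀ + 2 * latG M K E - 2 * latG M (fun w => K w + 2 * e w) E

/-- The Alexander grading `A([K,E]) = (1/2)(L_{[K,E]}(Σ) + Σ·Σ)`, computed with the
framing `m₀` on `v₀`. -/
noncomputable def AlexAt [Fintype V] [DecidableEq V] (M : V → V → ℤ) (e : V → ℤ) (m₀ : ℤ)
    (K : V → ℤ) (E : Finset V) : ℚ :=
  (1 / 2) * ((∑ x : Option V, (LextV M e m₀ K E x : ℚ) * sigmaV M e x)
    + ∑ x : Option V, ∑ y : Option V, (Mext M e m₀ x y : ℚ) * sigmaV M e x * sigmaV M e y)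

/-- The Alexander grading `A([K,E])` (independent of the framing; computed with framing `0`). -/
noncomputable def Alex [Fintype V] [DecidableEq V] (M : V → V → ℤ) (e : V → ℤ)
    (K : V → ℤ) (E : Finset V) : ℚ :=
  AlexAt M e 0 K E

/-- The block-diagonal intersection matrix of the disjoint union of two plumbing graphs. -/
def Msum {V₁ V₂ : Type*} (M₁ : V₁ → V₁ → ℤ) (M₂ : V₂ → V₂ → ℤ) :
    V₁ ⊕ V₂ → V₁ ⊕ V₂ → ℤ := fun x y =>
  match x, y with
  | Sum.inl v, Sum.inl w => M₁ v w
  | Sum.inr v, Sum.inr w => M₂ v w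
  | _, _ => 0

/-! With framing `0`, `A([K,E]) = g(K,E) − g(K+2e,E) + e·a + (K·a + aᵀMa)/2` where `a = −M⁻¹e`.
For the block-diagonal matrix of a connected sum, `a` is the concatenation of the two vectors,
and `g` is additive: `f(K₁⊕K₂, I₁ ⊔ I₂) = f(K₁,I₁) + f(K₂,I₂)` (the halving is exact since the
`Kᵢ` are characteristic and the `Mᵢ` symmetric), so the minimum over subsets of `E₁ ⊔ E₂` is the
sum of the two minima. -/

theorem IsChar.add_two_mul {M : V → V → ℤ} {K : V → ℤ} (hK : IsChar M K) (e : V → ℤ) :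
    IsChar M (fun w => K w + 2 * e w) :=
  fun v => Int.ModEq.trans (by simp [Int.ModEq]) (hK v)

theorem IsChar.two_dvd_sum_add_sum_sum {M : V → V → ℤ} {K : V → ℤ}
    (hK : IsChar M K) (hsym : ∀ v w, M v w = M w v) (I : Finset V) :
    2 ∣ (∑ v ∈ I, K v) + ∑ v ∈ I, ∑ w ∈ I, M v w := by
  classical
  induction I using Finset.induction_on with
  | empty => simp
  | @insert a s ha ih =>
    have hrow : ∑ v ∈ s, ∑ w ∈ insert a s, M v w = ∑ w ∈ s, M a w + ∑ v ∈ s, ∑ w ∈ s, M v w := by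
      simp only [sum_insert ha, sum_add_distrib, hsym _ a]
    rw [sum_insert ha, sum_insert ha, sum_insert ha, hrow]
    obtain ⟨c, hc⟩ := ih
    obtain ⟨d, hd⟩ := (hK a).dvd
    omega

theorem latF_Msum_disjSum {V₁ V₂ : Type*}
    {M₁ : V₁ → V₁ → ℤ} {M₂ : V₂ → V₂ → ℤ} (hsym₁ : ∀ v w, M₁ v w = M₁ w v)
    (hsym₂ : ∀ v w, M₂ v w = M₂ w v) {K₁ : V₁ → ℤ} {K₂ : V₂ → ℤ} (hK₁ : IsChar M₁ K₁)
    (hK₂ : IsChar M₂ K₂) (I₁ : Finset V₁) (I₂ : Finset V₂) :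
    latF (Msum M₁ M₂) (Sum.elim K₁ K₂) (I₁.disjSum I₂) = latF M₁ K₁ I₁ + latF M₂ K₂ I₂ := by
  obtain ⟨c₁, hc₁⟩ := hK₁.two_dvd_sum_add_sum_sum hsym₁ I₁
  obtain ⟨c₂, hc₂⟩ := hK₂.two_dvd_sum_add_sum_sum hsym₂ I₂
  simp only [latF, sum_disjSum, Msum, Sum.elim_inl, Sum.elim_inr, sum_const_zero, add_zero,
    zero_add]
  omega

theorem latG_le_latF (M : V → V → ℤ) (K : V → ℤ) {E I : Finset V} (h : I ⊆ E) :
    latG M K E ≤ latF M K I :=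
  min'_le _ _ (mem_image_of_mem _ (mem_powerset.2 h))

theorem exists_latF_eq_latG (M : V → V → ℤ) (K : V → ℤ) (E : Finset V) :
    ∃ I ⊆ E, latF M K I = latG M K E := by
  obtain ⟨I, hI, hval⟩ := mem_image.1 (min'_mem _ _ : latG M K E ∈ E.powerset.image (latF M K))
  exact ⟨I, mem_powerset.1 hI, hval⟩

theorem latG_Msum_disjSum {V₁ V₂ : Type*}
    {M₁ : V₁ → V₁ → ℤ} {M₂ : V₂ → V₂ → ℤ} (hsym₁ : ∀ v w, M₁ v w = M₁ w v)
    (hsym₂ : ∀ v w, M₂ v w = M₂ w v) {K₁ : V₁ → ℤ} {K₂ : V₂ → ℤ} (hK₁ : IsChar M₁ K₁)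
    (hK₂ : IsChar M₂ K₂) (E₁ : Finset V₁) (E₂ : Finset V₂) :
    latG (Msum M₁ M₂) (Sum.elim K₁ K₂) (E₁.disjSum E₂) = latG M₁ K₁ E₁ + latG M₂ K₂ E₂ := by
  apply le_antisymm
  · obtain ⟨I₁, hI₁, hf₁⟩ := exists_latF_eq_latG M₁ K₁ E₁
    obtain ⟨I₂, hI₂, hf₂⟩ := exists_latF_eq_latG M₂ K₂ E₂
    calc _ ≤ latF (Msum M₁ M₂) (Sum.elim K₁ K₂) (I₁.disjSum I₂) :=
          latG_le_latF _ _ (disjSum_mono hI₁ hI₂)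
      _ = latG M₁ K₁ E₁ + latG M₂ K₂ E₂ := by
          rw [latF_Msum_disjSum hsym₁ hsym₂ hK₁ hK₂, hf₁, hf₂]
  · obtain ⟨I, hI, hf⟩ := exists_latF_eq_latG (Msum M₁ M₂) (Sum.elim K₁ K₂) (E₁.disjSum E₂)
    obtain ⟨hL, hR⟩ := subset_disjSum.1 hI
    rw [← hf, ← toLeft_disjSum_toRight (u := I), latF_Msum_disjSum hsym₁ hsym₂ hK₁ hK₂]
    exact add_le_add (latG_le_latF _ _ hL) (latG_le_latF _ _ hR)

theorem NegDef.isUnit_ofInt [Fintype V] [DecidableEq V] {M : V → V → ℤ} (hM : NegDef M) :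
    IsUnit (Matrix.of fun a b => (M a b : ℚ)) := by
  rw [Matrix.isUnit_iff_isUnit_det, isUnit_iff_ne_zero]
  intro hdet
  obtain ⟨x, hx0, hx⟩ := Matrix.exists_mulVec_eq_zero_iff.2 hdet
  have hrow : ∀ v, ∑ w, (M v w : ℚ) * x w = 0 := fun v => by
    simpa [Matrix.mulVec, dotProduct] using congrFun hx v
  have hquad : ∑ v, ∑ w, (M v w : ℝ) * (x v : ℝ) * (x w : ℝ) = 0 := by
    calc _ = ∑ v, (x v : ℝ) * ((∑ w, (M v w : ℚ) * x w : ℚ) : ℝ) := by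
          push_cast
          simp_rw [mul_sum]
          exact sum_congr rfl fun v _ => sum_congr rfl fun w _ => by ring
      _ = 0 := by simp [hrow]
  refine (hM (fun v => x v) fun h0 => hx0 ?_).ne hquad
  funext v
  simpa using congrFun h0 v

theorem ofInt_Msum {V₁ V₂ : Type*} (M₁ : V₁ → V₁ → ℤ) (M₂ : V₂ → V₂ → ℤ) :
    (Matrix.of fun a b => (Msum M₁ M₂ a b : ℚ)) =
      Matrix.fromBlocks (Matrix.of fun a b => (M₁ a b : ℚ)) 0 0
        (Matrix.of fun a b => (M₂ a b : ℚ)) := by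
  ext (_ | _) (_ | _) <;> simp [Msum]

theorem sigmaC_Msum {V₁ V₂ : Type*} [Fintype V₁] [DecidableEq V₁] [Fintype V₂] [DecidableEq V₂]
    {M₁ : V₁ → V₁ → ℤ} {M₂ : V₂ → V₂ → ℤ} (hneg₁ : NegDef M₁) (hneg₂ : NegDef M₂)
    (e₁ : V₁ → ℤ) (e₂ : V₂ → ℤ) :
    sigmaC (Msum M₁ M₂) (Sum.elim e₁ e₂) = Sum.elim (sigmaC M₁ e₁) (sigmaC M₂ e₂) := by
  have hinv := Matrix.inv_fromBlocks_zero₁₂_of_isUnit_iff (Matrix.of fun a b => (M₁ a b : ℚ)) 0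
    (Matrix.of fun a b => (M₂ a b : ℚ)) (iff_of_true hneg₁.isUnit_ofInt hneg₂.isUnit_ofInt)
  ext (v | v) <;> simp [sigmaC, ofInt_Msum, hinv, Fintype.sum_sum_type]

theorem Alex_eq [Fintype V] [DecidableEq V] (M : V → V → ℤ) (e K : V → ℤ) (E : Finset V) :
    Alex M e K E = latG M K E - latG M (fun w => K w + 2 * e w) E + ∑ v, e v * sigmaC M e v
      + (∑ v, K v * sigmaC M e v + ∑ v, ∑ w, M v w * sigmaC M e v * sigmaC M e w) / 2 := by
  simp only [Alex, AlexAt, Fintype.sum_option, LextV, sigmaV, Mext, mul_one, sum_add_distrib]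
  push_cast
  ring

theorem stmt12_general {V₁ V₂ : Type*} [Fintype V₁] [DecidableEq V₁] [Fintype V₂] [DecidableEq V₂]
    (M₁ : V₁ → V₁ → ℤ) (M₂ : V₂ → V₂ → ℤ)
    (hsym₁ : ∀ v w, M₁ v w = M₁ w v) (hsym₂ : ∀ v w, M₂ v w = M₂ w v)
    (hneg₁ : NegDef M₁) (hneg₂ : NegDef M₂)
    (e₁ : V₁ → ℤ) (e₂ : V₂ → ℤ)
    (K₁ : V₁ → ℤ) (hK₁ : IsChar M₁ K₁) (K₂ : V₂ → ℤ) (hK₂ : IsChar M₂ K₂)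
    (E₁ : Finset V₁) (E₂ : Finset V₂) :
    Alex (Msum M₁ M₂) (Sum.elim e₁ e₂) (Sum.elim K₁ K₂) (E₁.disjSum E₂)
      = Alex M₁ e₁ K₁ E₁ + Alex M₂ e₂ K₂ E₂ := by
  have hshift : (fun w => Sum.elim K₁ K₂ w + 2 * Sum.elim e₁ e₂ w) =
      Sum.elim (fun w => K₁ w + 2 * e₁ w) (fun w => K₂ w + 2 * e₂ w) := by
    ext (_ | _) <;> rfl
  rw [Alex_eq, Alex_eq, Alex_eq, sigmaC_Msum hneg₁ hneg₂, hshift,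
    latG_Msum_disjSum hsym₁ hsym₂ hK₁ hK₂,
    latG_Msum_disjSum hsym₁ hsym₂ (hK₁.add_two_mul e₁) (hK₂.add_two_mul e₂)]
  simp only [Fintype.sum_sum_type, Sum.elim_inl, Sum.elim_inr, Msum, Int.cast_zero, zero_mul,
    sum_const_zero, add_zero, zero_add]
  push_cast
  ring

/-- additivity of the Alexander grading under connected sum:
`A_#([K₁⊕K₂, E₁ ∪ E₂]) = A₁([K₁,E₁]) + A₂([K₂,E₂])`. -/
theorem stmt12 {V₁ V₂ : Type*} [Fintype V₁] [DecidableEq V₁] [Fintype V₂] [DecidableEq V₂]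
    (M₁ : V₁ → V₁ → ℤ) (M₂ : V₂ → V₂ → ℤ)
    (hsym₁ : ∀ v w, M₁ v w = M₁ w v) (hsym₂ : ∀ v w, M₂ v w = M₂ w v)
    (hoff₁ : ∀ v w, v ≠ w → M₁ v w = 0 ∨ M₁ v w = 1)
    (hoff₂ : ∀ v w, v ≠ w → M₂ v w = 0 ∨ M₂ v w = 1)
    (hneg₁ : NegDef M₁) (hneg₂ : NegDef M₂)
    (e₁ : V₁ → ℤ) (he₁ : ∀ v, e₁ v = 0 ∨ e₁ v = 1)
    (e₂ : V₂ → ℤ) (he₂ : ∀ v, e₂ v = 0 ∨ e₂ v = 1)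
    (K₁ : V₁ → ℤ) (hK₁ : IsChar M₁ K₁) (K₂ : V₂ → ℤ) (hK₂ : IsChar M₂ K₂)
    (E₁ : Finset V₁) (E₂ : Finset V₂) :
    Alex (Msum M₁ M₂) (Sum.elim e₁ e₂) (Sum.elim K₁ K₂) (E₁.disjSum E₂)
      = Alex M₁ e₁ K₁ E₁ + Alex M₂ e₂ K₂ E₂ :=
  stmt12_general M₁ M₂ hsym₁ hsym₂ hneg₁ hneg₂ e₁ e₂ K₁ hK₁ K₂ hK₂ E₁ E₂
end

section
/- Let v ∈ V be a good vertex, i.e. M(v,v) + d_v ≤ 0 where d_v = #{w ∈ V : w ≠ v, M(v,w) = 1}, and write k = −M(v,v). Then for every characteristic vector K and every E ⊆ V with v ∈ E: if K(v) ≥ k then a_v(K,E) = 0, and if K(v) ≤ −k then b_v(K,E) = 0. -/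
open Finset

variable {V : Type*}

/-- Auxiliary: `2 f(K,I)` as an honest integer. -/
def latS (M : V → V → ℤ) (K : V → ℤ) (I : Finset V) : ℤ :=
  (∑ v ∈ I, K v) + ∑ v ∈ I, ∑ w ∈ I, M v w

lemma latS_insert [DecidableEq V] (M : V → V → ℤ) (K : V → ℤ)
    (hsym : ∀ v w, M v w = M w v) {v : V} {I : Finset V} (hv : v ∉ I) :
    latS M K (insert v I) = latS M K I + ((K v + M v v) + 2 * ∑ w ∈ I, M v w) := by
  unfold latS
  rw [Finset.sum_insert hv, Finset.sum_insert hv, Finset.sum_insert hv]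
  simp only [Finset.sum_insert hv, Finset.sum_add_distrib]
  have : ∑ x ∈ I, M x v = ∑ x ∈ I, M v x := Finset.sum_congr rfl (fun x _ => hsym x v)
  rw [this]; ring

lemma even_char {M : V → V → ℤ} {K : V → ℤ} (hK : IsChar M K) (v : V) :
    Even (K v + M v v) := by
  have h := (hK v).dvd
  rw [Int.even_iff]
  omega

lemma latS_even [DecidableEq V] (M : V → V → ℤ) (K : V → ℤ)
    (hsym : ∀ v w, M v w = M w v) (hK : IsChar M K) (I : Finset V) :
    Even (latS M K I) := by
  induction I using Finset.induction with
  | empty => simp [latS]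
  | @insert a s ha ih =>
    rw [latS_insert M K hsym ha]
    obtain ⟨c, hc⟩ := ih
    obtain ⟨d, hd⟩ := even_char hK a
    exact ⟨c + d + ∑ w ∈ s, M a w, by omega⟩

lemma two_mul_latF [DecidableEq V] (M : V → V → ℤ) (K : V → ℤ)
    (hsym : ∀ v w, M v w = M w v) (hK : IsChar M K) (I : Finset V) :
    2 * latF M K I = latS M K I := by
  obtain ⟨c, hc⟩ := latS_even M K hsym hK I
  have h : latF M K I = latS M K I / 2 := rfl
  omega

lemma latG_le [DecidableEq V] (M : V → V → ℤ) (K : V → ℤ) {I E : Finset V} (h : I ⊆ E) :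
    latG M K E ≤ latF M K I :=
  Finset.min'_le _ _ (Finset.mem_image_of_mem _ (Finset.mem_powerset.mpr h))

lemma latG_exists [DecidableEq V] (M : V → V → ℤ) (K : V → ℤ) (E : Finset V) :
    ∃ I ⊆ E, latF M K I = latG M K E := by
  obtain ⟨I, hI, hI2⟩ := Finset.mem_image.mp
    (Finset.min'_mem (E.powerset.image (latF M K)) _)
  exact ⟨I, Finset.mem_powerset.mp hI, hI2⟩

lemma latB_le [DecidableEq V] (M : V → V → ℤ) (K : V → ℤ) {I E : Finset V} {v : V}
    (h : I ⊆ E.erase v) : latB M K E v ≤ latF M K (insert v I) :=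
  Finset.min'_le _ _ (Finset.mem_image_of_mem _ (Finset.mem_powerset.mpr h))

lemma latB_exists [DecidableEq V] (M : V → V → ℤ) (K : V → ℤ) (E : Finset V) (v : V) :
    ∃ I ⊆ E.erase v, latF M K (insert v I) = latB M K E v := by
  obtain ⟨I, hI, hI2⟩ := Finset.mem_image.mp
    (Finset.min'_mem ((E.erase v).powerset.image (fun I => latF M K (insert v I))) _)
  exact ⟨I, Finset.mem_powerset.mp hI, hI2⟩

/-- for a good vertex `v` (with `k = −M(v,v)`): if `K(v) ≥ k` then
`a_v(K,E) = 0`, and if `K(v) ≤ −k` then `b_v(K,E) = 0`. -/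
theorem stmt14 [Fintype V] [DecidableEq V] (M : V → V → ℤ)
    (hsym : ∀ v w, M v w = M w v)
    (hoff : ∀ v w, v ≠ w → M v w = 0 ∨ M v w = 1)
    (hneg : NegDef M)
    (v : V)
    (hgood : M v v + (((univ.filter fun w => w ≠ v ∧ M v w = 1)).card : ℤ) ≤ 0)
    (K : V → ℤ) (hK : IsChar M K) (E : Finset V) (hv : v ∈ E) :
    (-(M v v) ≤ K v → lata M K E v = 0) ∧ (K v ≤ M v v → latb M K E v = 0) := by
  have hoff' : ∀ w ∈ E.erase v ∪ univ, True := fun _ _ => trivial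
  constructor
  · -- part (a)
    intro hKv
    have h1 : latG M K E ≤ latG M K (E.erase v) := by
      obtain ⟨I, hIsub, hIeq⟩ := latG_exists M K (E.erase v)
      rw [← hIeq]
      exact latG_le M K (hIsub.trans (Finset.erase_subset v E))
    have h2 : latG M K (E.erase v) ≤ latG M K E := by
      obtain ⟨I, hIsub, hIeq⟩ := latG_exists M K E
      rw [← hIeq]
      have hsub : I.erase v ⊆ E.erase v := Finset.erase_subset_erase v hIsub
      have hle : latF M K (I.erase v) ≤ latF M K I := by
        by_cases hvI : v ∈ I
        · have hins : insert v (I.erase v) = I := Finset.insert_erase hvI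
          have hnv : v ∉ I.erase v := Finset.notMem_erase v I
          have key := latS_insert M K hsym hnv
          rw [hins] at key
          have e1 := two_mul_latF M K hsym hK I
          have e2 := two_mul_latF M K hsym hK (I.erase v)
          have hsum : 0 ≤ ∑ w ∈ I.erase v, M v w := by
            apply Finset.sum_nonneg
            intro w hw
            rcases hoff v w (Ne.symm (Finset.ne_of_mem_erase hw)) with h | h <;> omega
          omega
        · rw [Finset.erase_eq_of_notMem hvI]
      exact le_trans (latG_le M K hsub) hle
    unfold lata; omega
  · -- part (b)
    intro hKv
    have h1 : latG M K E ≤ latB M K E v := by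
      obtain ⟨I, hIsub, hIeq⟩ := latB_exists M K E v
      rw [← hIeq]
      apply latG_le M K
      exact Finset.insert_subset hv (hIsub.trans (Finset.erase_subset v E))
    have h2 : latB M K E v ≤ latG M K E := by
      obtain ⟨I, hIsub, hIeq⟩ := latG_exists M K E
      rw [← hIeq]
      have hsub : I.erase v ⊆ E.erase v := Finset.erase_subset_erase v hIsub
      have hle : latF M K (insert v (I.erase v)) ≤ latF M K I := by
        by_cases hvI : v ∈ I
        · rw [Finset.insert_erase hvI]
        · rw [Finset.erase_eq_of_notMem hvI]
          have key := latS_insert M K hsym (v := v) (I := I) hvI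
          have e1 := two_mul_latF M K hsym hK I
          have e2 := two_mul_latF M K hsym hK (insert v I)
          -- bound the sum of neighbors
          have hsum : ∑ w ∈ I, M v w ≤
              ((univ.filter fun w => w ≠ v ∧ M v w = 1)).card := by
            have hstep : ∑ w ∈ I, M v w =
                ∑ w ∈ I.filter (fun w => w ≠ v ∧ M v w = 1), M v w := by
              symm
              apply Finset.sum_subset (Finset.filter_subset _ _)
              intro w hw hw'
              have hwv : w ≠ v := fun h => hvI (h ▸ hw)
              simp only [Finset.mem_filter, hw, true_and, not_and] at hw'
              rcases hoff v w (Ne.symm hwv) with h | h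
              · exact h
              · exact absurd h (hw' hwv)
            rw [hstep]
            calc ∑ w ∈ I.filter (fun w => w ≠ v ∧ M v w = 1), M v w
                = ∑ _w ∈ I.filter (fun w => w ≠ v ∧ M v w = 1), (1 : ℤ) := by
                  apply Finset.sum_congr rfl
                  intro w hw
                  exact (Finset.mem_filter.mp hw).2.2
              _ = ((I.filter (fun w => w ≠ v ∧ M v w = 1)).card : ℤ) := by
                  simp
              _ ≤ _ := by
                  exact_mod_cast Nat.cast_le.mpr (Finset.card_le_card
                    (Finset.filter_subset_filter _ (Finset.subset_univ I)))
          omega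
      exact le_trans (latB_le M K hsub) hle
    unfold latb; omega
end
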